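/- Under the stated setup and algorithm with step sizes η_t = η̄ (t+1)^{−1/2} d^{−1} and δ_t = δ̄ (t+1)^{−1/4} d^{−1/2}, for each t define the gradient-descent comparison trajectory z_0(x̂_t) = x̂_t and z_{s+1}(x̂_t) = z_s(x̂_t) − η_{t+s} ∇f̃(z_s(x̂_t)). Then for every fixed positive integer S, lim_{t → ∞} sup_{0 ≤ s ≤ S} E[‖x_{t+s} − z_s(x̂_t)‖²] = 0; i.e., the gradient descent flow started at x̂_t is an asymptotic pseudotrajectory of the algorithm's iterates. -/

import Mathlib

open MeasureTheory Metric Filter ProbabilityTheory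
open scoped RealInnerProductSpace

/-- The uniform (normalized surface/Hausdorff) probability measure on the unit sphere
`S^{d-1} ⊂ ℝ^d`. -/
noncomputable def sphereUniform (d : ℕ) : Measure (EuclideanSpace ℝ (Fin d)) :=
  (μH[(d : ℝ) - 1] (sphere (0 : EuclideanSpace ℝ (Fin d)) 1))⁻¹ •
    (μH[(d : ℝ) - 1]).restrict (sphere (0 : EuclideanSpace ℝ (Fin d)) 1)

/-- The full setup of the follower-agnostic Stackelberg optimization algorithm:
leader's iterates `x`, random sphere perturbations `v`, inner-loop outputs `y` (at the
perturbed point `x̂ₜ = xₜ + δₜ vₜ`) and `ytil` (at `xₜ`), equilibrium map `S`, leader's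
objective `f`, followers' feasible set `Y`, together with all standing assumptions
(Assumptions 1–3 of the paper) and the algorithmic update rules. -/
structure StackelbergAlg (d d' : ℕ) (Ω : Type) [MeasurableSpace Ω]
    (μ : Measure Ω) (Lx Ly LS Ltil ltil C α : ℝ) (η δv : ℕ → ℝ) : Type where
  Y : Set (EuclideanSpace ℝ (Fin d'))
  f : EuclideanSpace ℝ (Fin d) → EuclideanSpace ℝ (Fin d') → ℝ
  S : EuclideanSpace ℝ (Fin d) → EuclideanSpace ℝ (Fin d')
  x : ℕ → Ω → EuclideanSpace ℝ (Fin d)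
  v : ℕ → Ω → EuclideanSpace ℝ (Fin d)
  y : ℕ → Ω → EuclideanSpace ℝ (Fin d')
  ytil : ℕ → Ω → EuclideanSpace ℝ (Fin d')
  x0 : EuclideanSpace ℝ (Fin d)
  ytil0 : EuclideanSpace ℝ (Fin d')
  /-- the contraction factor of the lower level lies in (0,1) -/
  hα : 0 < α ∧ α < 1
  hη_pos : ∀ t, 0 < η t
  hδ_pos : ∀ t, 0 < δv t
  /-- `Y` is convex and compact (and nonempty) -/
  hY_conv : Convex ℝ Y
  hY_comp : IsCompact Y
  hY_ne : Y.Nonempty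
  /-- `f` is twice continuously differentiable -/
  hf_c2 : ContDiff ℝ 2 (fun p : EuclideanSpace ℝ (Fin d) × EuclideanSpace ℝ (Fin d') => f p.1 p.2)
  /-- for every `y ∈ Y`, `f (·, y)` is `Lx`-Lipschitz -/
  hfx_lip : ∀ y' ∈ Y, ∀ x1 x2, |f x1 y' - f x2 y'| ≤ Lx * ‖x1 - x2‖
  /-- for every `x`, `f (x, ·)` is `Ly`-Lipschitz on `Y` -/
  hfy_lip : ∀ x', ∀ y1 ∈ Y, ∀ y2 ∈ Y, |f x' y1 - f x' y2| ≤ Ly * ‖y1 - y2‖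
  /-- `f (x, ·)` is `ℓy`-smooth is not needed below; the equilibrium response is
  single-valued, `Y`-valued, and `LS`-Lipschitz -/
  hS_mem : ∀ x', S x' ∈ Y
  hS_lip : ∀ x1 x2, ‖S x1 - S x2‖ ≤ LS * ‖x1 - x2‖
  /-- the hyper-objective `f̃ = f(·, S ·)` is twice continuously differentiable,
  `Ltil`-Lipschitz and `ltil`-smooth -/
  hftil_c2 : ContDiff ℝ 2 (fun z => f z (S z))
  hftil_lip : ∀ x1 x2, |f x1 (S x1) - f x2 (S x2)| ≤ Ltil * ‖x1 - x2‖
  hftil_smooth : ∀ x1 x2,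
    ‖gradient (fun z => f z (S z)) x1 - gradient (fun z => f z (S z)) x2‖ ≤ ltil * ‖x1 - x2‖
  /-- measurability of all random processes -/
  hx_meas : ∀ t, Measurable (x t)
  hv_meas : ∀ t, Measurable (v t)
  hy_meas : ∀ t, Measurable (y t)
  hytil_meas : ∀ t, Measurable (ytil t)
  /-- deterministic initial conditions -/
  hx_init : ∀ ω, x 0 ω = x0
  hytil_init : ∀ ω, ytil 0 ω = ytil0
  /-- the inner iterates lie in `Y` -/
  hy_mem : ∀ t ω, y t ω ∈ Y
  hytil_mem : ∀ t ω, ytil t ω ∈ Y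
  /-- the perturbations are unit vectors, i.i.d. uniform on the unit sphere, and `vₜ` is
  independent of the iterates generated up to time `t` -/
  hv_norm : ∀ t ω, ‖v t ω‖ = 1
  hv_law : ∀ t, Measure.map (v t) μ = sphereUniform d
  hv_iid : iIndepFun v μ
  hv_indep : ∀ t, IndepFun (v t)
      (fun ω => ((fun s : Fin (t + 1) => x s.1 ω), (fun s : Fin (t + 1) => ytil s.1 ω))) μ
  /-- inner loop guarantee (i): the two inner-loop outputs are `C δₜ`-close -/
  hy_close : ∀ t ω, ‖y t ω - ytil t ω‖ ≤ C * δv t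
  /-- inner loop guarantee (ii): contraction by a factor `α` towards the equilibrium response,
  warm-started from the previous output `ỹₜ₋₁` -/
  hy_contract : ∀ t ω, ‖y (t + 1) ω - S (x (t + 1) ω + δv (t + 1) • v (t + 1) ω)‖ ^ 2
      ≤ α * ‖ytil t ω - S (x (t + 1) ω + δv (t + 1) • v (t + 1) ω)‖ ^ 2
  hytil_contract : ∀ t ω, ‖ytil (t + 1) ω - S (x (t + 1) ω)‖ ^ 2
      ≤ α * ‖ytil t ω - S (x (t + 1) ω)‖ ^ 2
  /-- the leader's update `x_{t+1} = x_t − η_t F̂_t` with the two-point estimator `F̂_t` -/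
  hx_upd : ∀ t ω, x (t + 1) ω = x t ω - η t •
      ((((d : ℝ) / δv t) * (f (x t ω + δv t • v t ω) (y t ω) - f (x t ω) (ytil t ω))) • v t ω)

namespace StackelbergAlg

variable {d d' : ℕ} {Ω : Type} [MeasurableSpace Ω] {μ : Measure Ω}
  {Lx Ly LS Ltil ltil C α : ℝ} {η δv : ℕ → ℝ}

/-- The hyper-objective `f̃(x) = f(x, S(x))`. -/
noncomputable def ftil (A : StackelbergAlg d d' Ω μ Lx Ly LS Ltil ltil C α η δv) :
    EuclideanSpace ℝ (Fin d) → ℝ := fun z => A.f z (A.S z)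

/-- The perturbed query point `x̂ₜ = xₜ + δₜ vₜ`. -/
noncomputable def xhat (A : StackelbergAlg d d' Ω μ Lx Ly LS Ltil ltil C α η δv)
    (t : ℕ) (ω : Ω) : EuclideanSpace ℝ (Fin d) := A.x t ω + δv t • A.v t ω

/-- The two-point zeroth-order gradient estimator `F̂ₜ`. -/
noncomputable def Fhat (A : StackelbergAlg d d' Ω μ Lx Ly LS Ltil ltil C α η δv)
    (t : ℕ) (ω : Ω) : EuclideanSpace ℝ (Fin d) :=
  (((d : ℝ) / δv t) * (A.f (A.xhat t ω) (A.y t ω) - A.f (A.x t ω) (A.ytil t ω))) • A.v t ω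

end StackelbergAlg

/-- The exact gradient-descent comparison trajectory started at `x₀` at stage `t`:
`z_0 = x₀`, `z_{s+1} = z_s − η_{t+s} ∇f̃(z_s)`. -/
noncomputable def gdTraj {d : ℕ} (g : EuclideanSpace ℝ (Fin d) → ℝ) (η : ℕ → ℝ)
    (t : ℕ) (x0 : EuclideanSpace ℝ (Fin d)) : ℕ → EuclideanSpace ℝ (Fin d)
  | 0 => x0
  | s + 1 => gdTraj g η t x0 s - η (t + s) • gradient g (gdTraj g η t x0 s)

/-! The leader's iterates and the comparison trajectory move by steps `η F̂` and `η ∇f̃`, both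
uniformly bounded: `|f(x̂ₜ, yₜ) − f(xₜ, ỹₜ)| ≤ (Lx + Ly C) δₜ` cancels the factor `d / δₜ` of the
two-point estimator, and `‖∇f̃‖ ≤ L̃` because `f̃` is `L̃`-Lipschitz. Hence, for every `ω`,
`‖x_{t+s} − z_s(x̂ₜ)‖ ≤ δₜ + (η_t + ⋯ + η_{t+s-1}) (d (Lx + Ly C) + L̃)`, a bound that tends to `0`
as `t → ∞` uniformly in `s ≤ S`; so do the second moments. -/

theorem norm_gradient_le_of_lipschitz {F : Type*} [NormedAddCommGroup F]
    [InnerProductSpace ℝ F] [CompleteSpace F] {f : F → ℝ} {K : NNReal}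
    (hf : LipschitzWith K f) (x : F) : ‖gradient f x‖ ≤ K := by
  rw [gradient, LinearIsometryEquiv.norm_map]
  exact norm_fderiv_le_of_lipschitz ℝ hf

open Finset in
theorem norm_sub_gdTraj_le {d : ℕ} {g : EuclideanSpace ℝ (Fin d) → ℝ} {η : ℕ → ℝ}
    {x F : ℕ → EuclideanSpace ℝ (Fin d)} {B G : ℝ} (hη : ∀ r, 0 ≤ η r)
    (hx : ∀ r, x (r + 1) = x r - η r • F r) (hF : ∀ r, ‖F r‖ ≤ B)
    (hg : ∀ z, ‖gradient g z‖ ≤ G) (t : ℕ) (x0 : EuclideanSpace ℝ (Fin d)) (s : ℕ) :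
    ‖x (t + s) - gdTraj g η t x0 s‖ ≤ ‖x t - x0‖ + (∑ r ∈ range s, η (t + r)) * (B + G) := by
  induction s with
  | zero => simp [gdTraj]
  | succ s ih =>
    set z := gdTraj g η t x0 s
    have hstep : x (t + (s + 1)) - gdTraj g η t x0 (s + 1)
        = (x (t + s) - z) + η (t + s) • (gradient g z - F (t + s)) := by
      rw [← add_assoc, hx, gdTraj, smul_sub]
      abel
    calc ‖x (t + (s + 1)) - gdTraj g η t x0 (s + 1)‖
        ≤ ‖x (t + s) - z‖ + η (t + s) * (‖gradient g z‖ + ‖F (t + s)‖) := by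
          rw [hstep]
          refine (norm_add_le _ _).trans (add_le_add_right ?_ _)
          rw [norm_smul, Real.norm_of_nonneg (hη _)]
          exact mul_le_mul_of_nonneg_left (norm_sub_le _ _) (hη _)
      _ ≤ ‖x t - x0‖ + (∑ r ∈ range (s + 1), η (t + r)) * (B + G) := by
          rw [sum_range_succ]
          nlinarith [hη (t + s), hg z, hF (t + s)]

theorem tendsto_iSup_of_le_of_tendsto_zero {ι : Type*} [Finite ι] [Nonempty ι]
    {u : ℕ → ι → ℝ} {c : ℕ → ℝ} (h0 : ∀ t i, 0 ≤ u t i) (hc : ∀ t i, u t i ≤ c t)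
    (hlim : Tendsto c atTop (nhds 0)) : Tendsto (fun t => ⨆ i, u t i) atTop (nhds 0) := by
  refine squeeze_zero (fun t => ?_) (fun t => ciSup_le (hc t)) hlim
  obtain ⟨i⟩ := ‹Nonempty ι›
  exact (h0 t i).trans (le_ciSup (Set.finite_range _).bddAbove i)

theorem tendsto_mul_natCast_add_one_rpow_neg_mul (a b : ℝ) {p : ℝ} (hp : 0 < p) :
    Tendsto (fun t : ℕ => a * ((t : ℝ) + 1) ^ (-p) * b) atTop (nhds 0) := by
  have h : Tendsto (fun t : ℕ => ((t : ℝ) + 1) ^ (-p)) atTop (nhds 0) :=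
    (tendsto_rpow_neg_atTop hp).comp
      (tendsto_atTop_add_const_right _ 1 tendsto_natCast_atTop_atTop)
  simpa using (h.const_mul a).mul_const b

namespace StackelbergAlg

variable {d d' : ℕ} {Ω : Type} [MeasurableSpace Ω] {μ : Measure Ω}
  {Lx Ly LS Ltil ltil C α : ℝ} {η δv : ℕ → ℝ}
  (A : StackelbergAlg d d' Ω μ Lx Ly LS Ltil ltil C α η δv)

theorem x_succ (t : ℕ) (ω : Ω) : A.x (t + 1) ω = A.x t ω - η t • A.Fhat t ω :=
  A.hx_upd t ω

theorem norm_xhat_sub (t : ℕ) (ω : Ω) : ‖A.xhat t ω - A.x t ω‖ = δv t := by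
  rw [xhat, add_sub_cancel_left, norm_smul, A.hv_norm, mul_one,
    Real.norm_of_nonneg (A.hδ_pos t).le]

theorem abs_sub_f_le (hLy : 0 ≤ Ly) (t : ℕ) (ω : Ω) :
    |A.f (A.xhat t ω) (A.y t ω) - A.f (A.x t ω) (A.ytil t ω)| ≤ (Lx + Ly * C) * δv t := by
  have hx := A.hfx_lip _ (A.hy_mem t ω) (A.xhat t ω) (A.x t ω)
  have hy := A.hfy_lip (A.x t ω) _ (A.hy_mem t ω) _ (A.hytil_mem t ω)
  rw [A.norm_xhat_sub] at hx
  calc _ ≤ |A.f (A.xhat t ω) (A.y t ω) - A.f (A.x t ω) (A.y t ω)|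
        + |A.f (A.x t ω) (A.y t ω) - A.f (A.x t ω) (A.ytil t ω)| := abs_sub_le _ _ _
    _ ≤ Lx * δv t + Ly * (C * δv t) :=
        add_le_add hx (hy.trans (mul_le_mul_of_nonneg_left (A.hy_close t ω) hLy))
    _ = (Lx + Ly * C) * δv t := by ring

theorem norm_Fhat_le (hLy : 0 ≤ Ly) (t : ℕ) (ω : Ω) :
    ‖A.Fhat t ω‖ ≤ d * (Lx + Ly * C) := by
  have hδ := A.hδ_pos t
  rw [Fhat, norm_smul, A.hv_norm, mul_one, norm_mul, Real.norm_of_nonneg (by positivity),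
    Real.norm_eq_abs]
  calc (d : ℝ) / δv t * |A.f (A.xhat t ω) (A.y t ω) - A.f (A.x t ω) (A.ytil t ω)|
      ≤ d / δv t * ((Lx + Ly * C) * δv t) :=
        mul_le_mul_of_nonneg_left (A.abs_sub_f_le hLy t ω) (by positivity)
    _ = d * (Lx + Ly * C) := by field_simp

theorem norm_gradient_ftil_le (hLtil : 0 ≤ Ltil) (z : EuclideanSpace ℝ (Fin d)) :
    ‖gradient A.ftil z‖ ≤ Ltil :=
  norm_gradient_le_of_lipschitz (K := ⟨Ltil, hLtil⟩)
    (LipschitzWith.of_dist_le_mul fun x1 x2 => A.hftil_lip x1 x2) z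

open Finset in
theorem norm_x_sub_gdTraj_le (hLy : 0 ≤ Ly) (hLtil : 0 ≤ Ltil) (t : ℕ) (ω : Ω) (s : ℕ) :
    ‖A.x (t + s) ω - gdTraj A.ftil η t (A.xhat t ω) s‖
      ≤ δv t + (∑ r ∈ range s, η (t + r)) * (d * (Lx + Ly * C) + Ltil) := by
  have h := norm_sub_gdTraj_le (x := fun r => A.x r ω) (fun r => (A.hη_pos r).le)
    (fun r => A.x_succ r ω) (fun r => A.norm_Fhat_le hLy r ω) (A.norm_gradient_ftil_le hLtil)
    t (A.xhat t ω) s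
  rwa [norm_sub_rev (A.x t ω), A.norm_xhat_sub] at h

open Finset in
theorem tendsto_iSup_integral_sq_norm_x_sub_gdTraj [IsProbabilityMeasure μ]
    (hLx : 0 ≤ Lx) (hLy : 0 ≤ Ly) (hC : 0 ≤ C) (hLtil : 0 ≤ Ltil)
    (hη : Tendsto η atTop (nhds 0)) (hδ : Tendsto δv atTop (nhds 0)) (S : ℕ) :
    Tendsto (fun t : ℕ => ⨆ s : Fin (S + 1),
        ∫ ω, ‖A.x (t + s.1) ω - gdTraj A.ftil η t (A.xhat t ω) s.1‖ ^ 2 ∂μ)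
      atTop (nhds 0) := by
  set K := d * (Lx + Ly * C) + Ltil
  have hK : 0 ≤ K := by positivity
  let c t := (δv t + (∑ r ∈ range S, η (t + r)) * K) ^ 2
  have hc : Tendsto c atTop (nhds 0) := by
    have hsum : Tendsto (fun t => ∑ r ∈ range S, η (t + r)) atTop (nhds 0) := by
      simpa using tendsto_finsetSum _ fun r _ => hη.comp (tendsto_add_atTop_nat r)
    simpa [c] using ((hδ.add (hsum.mul_const K)).pow 2)
  have hbound (t : ℕ) (s : Fin (S + 1)) (ω : Ω) :
      ‖A.x (t + s.1) ω - gdTraj A.ftil η t (A.xhat t ω) s.1‖ ^ 2 ≤ c t := by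
    have hsub : ∑ r ∈ range s.1, η (t + r) ≤ ∑ r ∈ range S, η (t + r) :=
      sum_le_sum_of_subset_of_nonneg (range_subset_range.2 (Nat.lt_succ_iff.1 s.2))
        fun r _ _ => (A.hη_pos _).le
    refine pow_le_pow_left₀ (norm_nonneg _) ?_ 2
    exact (A.norm_x_sub_gdTraj_le hLy hLtil t ω s).trans (by gcongr)
  refine tendsto_iSup_of_le_of_tendsto_zero (fun t s => integral_nonneg fun ω => by positivity)
    (fun t s => ?_) hc
  -- no integrability is needed: the Bochner integral of a non-integrable function is `0`
  have h := norm_integral_le_of_norm_le_const (μ := μ)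
    (Eventually.of_forall fun ω => (Real.norm_of_nonneg (by positivity)).trans_le (hbound t s ω))
  simpa using (le_abs_self _).trans h

end StackelbergAlg

theorem gradient_descent_is_asymptotic_pseudotrajectory_general
    (d d' : ℕ)
    (Lx Ly LS Ltil ltil C α ηbar δbar : ℝ)
    (hLx : 0 < Lx) (hLy : 0 < Ly) (hLtil : 0 < Ltil)
    (hC : 0 < C)
    (Ω : Type) [MeasurableSpace Ω] (μ : Measure Ω) [IsProbabilityMeasure μ]
    (A : StackelbergAlg d d' Ω μ Lx Ly LS Ltil ltil C α
      (fun t => ηbar * ((t : ℝ) + 1) ^ (-(1/2 : ℝ)) * (d : ℝ)⁻¹)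
      (fun t => δbar * ((t : ℝ) + 1) ^ (-(1/4 : ℝ)) * (d : ℝ) ^ (-(1/2 : ℝ)))) :
    ∀ S : ℕ, 0 < S →
      Tendsto (fun t : ℕ => ⨆ s : Fin (S + 1),
          ∫ ω, ‖A.x (t + s.1) ω
              - gdTraj A.ftil (fun r => ηbar * ((r : ℝ) + 1) ^ (-(1/2 : ℝ)) * (d : ℝ)⁻¹)
                  t (A.xhat t ω) s.1‖ ^ 2 ∂μ)
        atTop (nhds 0) := fun S _ =>
  A.tendsto_iSup_integral_sq_norm_x_sub_gdTraj hLx.le hLy.le hC.le hLtil.le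
    (tendsto_mul_natCast_add_one_rpow_neg_mul _ _ (by norm_num))
    (tendsto_mul_natCast_add_one_rpow_neg_mul _ _ (by norm_num)) S

/-- **Lemma 3 (asymptotic pseudotrajectory).** With step sizes `ηₜ = η̄ (t+1)^{-1/2} d⁻¹`
and `δₜ = δ̄ (t+1)^{-1/4} d^{-1/2}`, for every fixed positive integer `S`,
`lim_{t→∞} sup_{0 ≤ s ≤ S} E[‖x_{t+s} − z_s(x̂_t)‖²] = 0`, where `z` is the exact gradient
descent trajectory started at the perturbed point `x̂ₜ`. -/
theorem gradient_descent_is_asymptotic_pseudotrajectory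
    (d d' : ℕ) (hd : 1 ≤ d)
    (Lx Ly LS Ltil ltil C α ηbar δbar : ℝ)
    (hLx : 0 < Lx) (hLy : 0 < Ly) (hLS : 0 < LS) (hLtil : 0 < Ltil) (hltil : 0 < ltil)
    (hC : 0 < C) (hηbar : 0 < ηbar) (hδbar : 0 < δbar)
    (Ω : Type) [MeasurableSpace Ω] (μ : Measure Ω) [IsProbabilityMeasure μ]
    (A : StackelbergAlg d d' Ω μ Lx Ly LS Ltil ltil C α
      (fun t => ηbar * ((t : ℝ) + 1) ^ (-(1/2 : ℝ)) * (d : ℝ)⁻¹)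
      (fun t => δbar * ((t : ℝ) + 1) ^ (-(1/4 : ℝ)) * (d : ℝ) ^ (-(1/2 : ℝ)))) :
    ∀ S : ℕ, 0 < S →
      Tendsto (fun t : ℕ => ⨆ s : Fin (S + 1),
          ∫ ω, ‖A.x (t + s.1) ω
              - gdTraj A.ftil (fun r => ηbar * ((r : ℝ) + 1) ^ (-(1/2 : ℝ)) * (d : ℝ)⁻¹)
                  t (A.xhat t ω) s.1‖ ^ 2 ∂μ)
        atTop (nhds 0) :=
  gradient_descent_is_asymptotic_pseudotrajectory_general d d' Lx Ly LS Ltil ltil C α ηbar δbar hLx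
    hLy hLtil hC Ω μ A
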